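/- Let π* be α-optimal in a finite discounted MDP, so Q^{π*}(s,a) = α log π*(a|s) + V^{π*}(s). For any policy π, the negative regret −Reg(s,a) := Q^{π}(s,a) − V^{π*}(s) decomposes as −Reg(s,a) = α·( log π*(a|s) − D̄(π‖π*; s,a) ), where D̄ is the sequential forward KL divergence. In particular, the regret does not depend on the choice of reward within the (α,π*)-equivalence class (i.e., it is invariant under the transformation β(s)). -/

import Mathlib

open Finset

variable {S A : Type*}

/-- A policy: for each state, a probability distribution over actions. -/
def IsPolicy [Fintype A] (π : S → A → ℝ) : Prop :=
  (∀ s a, 0 ≤ π s a) ∧ ∀ s, ∑ a, π s a = 1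

/-- A transition kernel: for each state-action pair, a distribution over next states. -/
def IsKernel [Fintype S] (P : S → A → S → ℝ) : Prop :=
  (∀ s a s', 0 ≤ P s a s') ∧ ∀ s a, ∑ s', P s a s' = 1

/-- Shannon entropy of a finitely supported distribution. -/
noncomputable def entH [Fintype A] (p : A → ℝ) : ℝ := -∑ a, p a * Real.log (p a)

/-- Kullback–Leibler divergence on a finite set. -/
noncomputable def KLdiv [Fintype A] (p q : A → ℝ) : ℝ := ∑ a, p a * Real.log (p a / q a)

/-- Soft (log-sum-exp) value of a Q-function at a state. -/
noncomputable def softV [Fintype A] (α : ℝ) (Q : S → A → ℝ) (s : S) : ℝ :=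
  α * Real.log (∑ a, Real.exp (Q s a / α))

/-- Q satisfies the soft Bellman equation for policy π under reward r. -/
def IsSoftQ [Fintype S] [Fintype A] (P : S → A → S → ℝ) (r : S → A → ℝ) (γ α : ℝ)
    (π : S → A → ℝ) (Q : S → A → ℝ) : Prop :=
  ∀ s a, Q s a = r s a + γ * ∑ s', P s a s' *
    ((∑ a', π s' a' * Q s' a') + α * entH (π s'))

/-- π is the softmax (α-optimal) policy of the soft Q-function Q. -/
def IsAlphaOptimal [Fintype A] (α : ℝ) (π : S → A → ℝ) (Q : S → A → ℝ) : Prop :=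
  ∀ s a, π s a = Real.exp ((Q s a - softV α Q s) / α)

/-- `EKL P π πstar n s a` = expected KL divergence `D_KL(π(·|s_{n+1}) ‖ πstar(·|s_{n+1}))`
at time `n+1` along a π-trajectory started at `(s_0, a_0) = (s, a)`. -/
noncomputable def EKL [Fintype S] [Fintype A] (P : S → A → S → ℝ)
    (π πstar : S → A → ℝ) : ℕ → S → A → ℝ
  | 0 => fun s a => ∑ s', P s a s' * KLdiv (π s') (πstar s')
  | (n+1) => fun s a => ∑ s', P s a s' * ∑ a', π s' a' * EKL P π πstar n s' a'

/-- Sequential forward KL divergence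
`D̄(π‖πstar; s,a) = Σ_{t≥1} γ^t E[D_KL(π(·|s_t)‖πstar(·|s_t))]`. -/
noncomputable def seqKL [Fintype S] [Fintype A] (P : S → A → S → ℝ)
    (π πstar : S → A → ℝ) (γ : ℝ) (s : S) (a : A) : ℝ :=
  ∑' n : ℕ, γ ^ (n + 1) * EKL P π πstar n s a

/-- `stateDist P π n s a x` = probability of being at state `x` at time `n+1` along a
π-trajectory started at `(s_0, a_0) = (s, a)`. -/
noncomputable def stateDist [Fintype S] [Fintype A] (P : S → A → S → ℝ)
    (π : S → A → ℝ) : ℕ → S → A → S → ℝ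
  | 0 => fun s a x => P s a x
  | (n+1) => fun s a x => ∑ s', stateDist P π n s a s' * ∑ a', π s' a' * P s' a' x

/-! Write `D = Qstar - Qπ`. Since `πstar` is the softmax of `Qstar`, `Qstar = α log πstar + V*`,
so the soft value of any policy `ρ` under `Qstar` is `V* - α KL(ρ ‖ πstar)`. Subtracting the two
soft Bellman equations gives `D = γ (α EKL₀ + T D)`, where `T` is the one-step averaging operator
of the `π`-chain, a sup-norm contraction. Solving by the Neumann series,
`D = ∑ γⁿ⁺¹ Tⁿ (α EKL₀) = α D̄(π ‖ πstar)`, and `Qπ - V* = (Qstar - V*) - D`. -/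

section NeumannSeries

variable {E : Type*} [NormedAddCommGroup E] [NormedSpace ℝ E] [CompleteSpace E]

theorem hasSum_pow_apply_of_eq_add (T : E →L[ℝ] E) (hT : ‖T‖ < 1) {x y : E}
    (hx : x = y + T x) : HasSum (fun n => (T ^ n) y) x := by
  have hy : y = (1 - T) x := by
    rw [sub_apply, one_apply_eq_self]
    exact eq_sub_of_add_eq hx.symm
  convert (summable_geometric_of_norm_lt_one hT).hasSum.mapL
    (ContinuousLinearMap.apply ℝ E y) using 1
  · rfl
  · rw [ContinuousLinearMap.apply_apply, hy, ← mul_apply_eq_comp,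
      geom_series_mul_neg T hT, one_apply_eq_self]

theorem hasSum_smul_pow_apply_of_eq_smul_add (T : E →L[ℝ] E) (hT : ‖T‖ ≤ 1) {γ : ℝ}
    (hγ : |γ| < 1) {x y : E} (hx : x = γ • (y + T x)) :
    HasSum (fun n => γ ^ (n + 1) • (T ^ n) y) x := by
  have hγT : ‖γ • T‖ < 1 :=
    calc ‖γ • T‖ = |γ| * ‖T‖ := by rw [norm_smul, Real.norm_eq_abs]
      _ ≤ |γ| := mul_le_of_le_one_right (abs_nonneg γ) hT
      _ < 1 := hγ
  convert hasSum_pow_apply_of_eq_add (γ • T) hγT (y := γ • y) (by rwa [smul_add] at hx)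
    using 2 with n
  rw [smul_pow, smul_apply, map_smul, smul_smul, pow_succ]

end NeumannSeries

theorem abs_sum_mul_le_of_sum_eq_one {ι : Type*} [Fintype ι] {p g : ι → ℝ} {M : ℝ}
    (hp : ∀ i, 0 ≤ p i) (hp1 : ∑ i, p i = 1) (hg : ∀ i, |g i| ≤ M) :
    |∑ i, p i * g i| ≤ M :=
  calc |∑ i, p i * g i| ≤ ∑ i, p i * M := by
        refine (abs_sum_le_sum_abs _ _).trans (sum_le_sum fun i _ => ?_)
        rw [abs_mul, abs_of_nonneg (hp i)]
        exact mul_le_mul_of_nonneg_left (hg i) (hp i)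
    _ = M := by rw [← sum_mul, hp1, one_mul]

section KL

variable [Fintype A]

theorem KLdiv_self (p : A → ℝ) : KLdiv p p = 0 := by
  refine sum_eq_zero fun a _ => ?_
  rcases eq_or_ne (p a) 0 with h | h <;> simp [h]

theorem KLdiv_eq_neg_entH_sub (p : A → ℝ) {q : A → ℝ} (hq : ∀ a, q a ≠ 0) :
    KLdiv p q = -entH p - ∑ a, p a * Real.log (q a) := by
  rw [entH, neg_neg, ← sum_sub_distrib]
  refine sum_congr rfl fun a _ => ?_
  rcases eq_or_ne (p a) 0 with h | h
  · simp [h]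
  · rw [Real.log_div h (hq a), mul_sub]

theorem IsAlphaOptimal.pos {α : ℝ} {π Q : S → A → ℝ} (hopt : IsAlphaOptimal α π Q) (s : S)
    (a : A) : 0 < π s a :=
  hopt s a ▸ Real.exp_pos _

theorem IsAlphaOptimal.mul_log_eq {α : ℝ} {π Q : S → A → ℝ} (hopt : IsAlphaOptimal α π Q)
    (hα : α ≠ 0) (s : S) (a : A) : α * Real.log (π s a) = Q s a - softV α Q s := by
  rw [hopt s a, Real.log_exp, mul_div_cancel₀ _ hα]

theorem IsAlphaOptimal.sum_mul_add_entH_eq {α : ℝ} {π Q ρ : S → A → ℝ}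
    (hopt : IsAlphaOptimal α π Q) (hα : α ≠ 0) (hρ : IsPolicy ρ) (s : S) :
    ∑ a, ρ s a * Q s a + α * entH (ρ s) = softV α Q s - α * KLdiv (ρ s) (π s) := by
  have hQ : ∀ a, Q s a = α * Real.log (π s a) + softV α Q s := fun a => by
    rw [hopt.mul_log_eq hα]; ring
  simp only [hQ, KLdiv_eq_neg_entH_sub (ρ s) fun a => (hopt.pos s a).ne', mul_add,
    sum_add_distrib, ← sum_mul, hρ.2 s, mul_left_comm _ α, ← mul_sum]
  ring

end KL

section MarkovOperator

variable [Fintype S] [Fintype A]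

noncomputable def markovOperator (P : S → A → S → ℝ) (π : S → A → ℝ) :
    (S → A → ℝ) →L[ℝ] (S → A → ℝ) :=
  LinearMap.toContinuousLinearMap
    { toFun := fun f s a => ∑ s', P s a s' * ∑ a', π s' a' * f s' a'
      map_add' := fun f g => by
        ext s a
        simp only [Pi.add_apply, mul_add, sum_add_distrib]
      map_smul' := fun c f => by
        ext s a
        simp only [Pi.smul_apply, smul_eq_mul, RingHom.id_apply, mul_sum]
        exact sum_congr rfl fun _ _ => sum_congr rfl fun _ _ => by ring }

@[simp]
theorem markovOperator_apply (P : S → A → S → ℝ) (π : S → A → ℝ) (f : S → A → ℝ) (s : S)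
    (a : A) : markovOperator P π f s a = ∑ s', P s a s' * ∑ a', π s' a' * f s' a' :=
  rfl

theorem norm_markovOperator_le_one {P : S → A → S → ℝ} {π : S → A → ℝ} (hP : IsKernel P)
    (hπ : IsPolicy π) : ‖markovOperator P π‖ ≤ 1 := by
  refine ContinuousLinearMap.opNorm_le_bound _ zero_le_one fun f => ?_
  rw [one_mul, pi_norm_le_iff_of_nonneg (norm_nonneg f)]
  intro s
  rw [pi_norm_le_iff_of_nonneg (norm_nonneg f)]
  intro a
  have hf : ∀ s' a', |f s' a'| ≤ ‖f‖ := fun s' a' =>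
    (norm_le_pi_norm (f s') a').trans (norm_le_pi_norm f s')
  exact abs_sum_mul_le_of_sum_eq_one (hP.1 s a) (hP.2 s a) fun s' =>
    abs_sum_mul_le_of_sum_eq_one (hπ.1 s') (hπ.2 s') (hf s')

theorem EKL_eq_markovOperator_pow_apply (P : S → A → S → ℝ) (π πstar : S → A → ℝ) (n : ℕ) :
    EKL P π πstar n = (markovOperator P π ^ n) (EKL P π πstar 0) := by
  induction n with
  | zero => rfl
  | succ n ih =>
    rw [pow_succ', mul_apply_eq_comp, ← ih]
    rfl

theorem IsSoftQ.sub_eq {P : S → A → S → ℝ} {r : S → A → ℝ} {γ α : ℝ} {π₁ π₂ Q₁ Q₂ : S → A → ℝ}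
    (h₁ : IsSoftQ P r γ α π₁ Q₁) (h₂ : IsSoftQ P r γ α π₂ Q₂) (s : S) (a : A) :
    Q₁ s a - Q₂ s a = γ * ∑ s', P s a s' *
      ((∑ a', π₁ s' a' * Q₁ s' a' + α * entH (π₁ s'))
        - (∑ a', π₂ s' a' * Q₂ s' a' + α * entH (π₂ s'))) := by
  simp only [h₁ s a, h₂ s a, mul_sub, sum_sub_distrib]
  ring

theorem sub_eq_smul_EKL_add_markovOperator {P : S → A → S → ℝ} {r : S → A → ℝ} {γ α : ℝ}
    (hα : α ≠ 0) {πstar π Qstar Qπ : S → A → ℝ} (hπstar : IsPolicy πstar) (hπ : IsPolicy π)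
    (hQstar : IsSoftQ P r γ α πstar Qstar) (hopt : IsAlphaOptimal α πstar Qstar)
    (hQπ : IsSoftQ P r γ α π Qπ) :
    Qstar - Qπ = γ • (α • EKL P π πstar 0 + markovOperator P π (Qstar - Qπ)) := by
  have hstep : ∀ s', (∑ a', πstar s' a' * Qstar s' a' + α * entH (πstar s'))
      - (∑ a', π s' a' * Qπ s' a' + α * entH (π s'))
      = α * KLdiv (π s') (πstar s') + ∑ a', π s' a' * (Qstar - Qπ) s' a' := fun s' => by
    have hsplit : ∑ a', π s' a' * Qπ s' a'
        = ∑ a', π s' a' * Qstar s' a' - ∑ a', π s' a' * (Qstar - Qπ) s' a' := by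
      rw [← sum_sub_distrib]
      exact sum_congr rfl fun a' _ => by simp only [Pi.sub_apply]; ring
    rw [hopt.sum_mul_add_entH_eq hα hπstar, KLdiv_self, hsplit]
    linarith [hopt.sum_mul_add_entH_eq hα hπ s']
  ext s a
  simp only [Pi.sub_apply, hQstar.sub_eq hQπ s a, hstep, Pi.smul_apply, Pi.add_apply,
    markovOperator_apply, EKL, smul_eq_mul, mul_add, sum_add_distrib, mul_sum, mul_left_comm]

end MarkovOperator

theorem stmt8_general [Fintype S] [Fintype A]
    (P : S → A → S → ℝ) (hP : IsKernel P)
    (r : S → A → ℝ) (γ α : ℝ) (hγ0 : 0 ≤ γ) (hγ1 : γ < 1) (hα : 0 < α)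
    (πstar π : S → A → ℝ) (hπstar : IsPolicy πstar) (hπ : IsPolicy π)
    (Qstar : S → A → ℝ) (hQstar : IsSoftQ P r γ α πstar Qstar)
    (hopt : IsAlphaOptimal α πstar Qstar)
    (Qπ : S → A → ℝ) (hQπ : IsSoftQ P r γ α π Qπ) :
    ∀ s a, Qπ s a - softV α Qstar s =
      α * (Real.log (πstar s a) - seqKL P π πstar γ s a) := by
  intro s a
  have hrec := sub_eq_smul_EKL_add_markovOperator hα.ne' hπstar hπ hQstar hopt hQπ
  have hsum := hasSum_smul_pow_apply_of_eq_smul_add (markovOperator P π)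
    (norm_markovOperator_le_one hP hπ) (abs_lt.2 ⟨by linarith, hγ1⟩) hrec
  have hseqKL : α * seqKL P π πstar γ s a = Qstar s a - Qπ s a := by
    rw [seqKL, ← tsum_mul_left]
    have hsum_sa := Pi.hasSum.1 (Pi.hasSum.1 hsum s) a
    simp only [map_smul, ← EKL_eq_markovOperator_pow_apply, Pi.smul_apply, Pi.sub_apply,
      smul_eq_mul, mul_left_comm] at hsum_sa
    exact hsum_sa.tsum_eq
  rw [mul_sub, hseqKL, hopt.mul_log_eq hα.ne']
  ring

theorem stmt8 [Fintype S] [Fintype A] [Nonempty A]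
    (P : S → A → S → ℝ) (hP : IsKernel P)
    (r : S → A → ℝ) (γ α : ℝ) (hγ0 : 0 ≤ γ) (hγ1 : γ < 1) (hα : 0 < α)
    (πstar π : S → A → ℝ) (hπstar : IsPolicy πstar) (hπ : IsPolicy π)
    (hsupp : ∀ s a, 0 < π s a → 0 < πstar s a)
    (Qstar : S → A → ℝ) (hQstar : IsSoftQ P r γ α πstar Qstar)
    (hopt : IsAlphaOptimal α πstar Qstar)
    (Qπ : S → A → ℝ) (hQπ : IsSoftQ P r γ α π Qπ) :
    ∀ s a, Qπ s a - softV α Qstar s =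
      α * (Real.log (πstar s a) - seqKL P π πstar γ s a) :=
  stmt8_general P hP r γ α hγ0 hγ1 hα πstar π hπstar hπ Qstar hQstar hopt Qπ hQπ
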